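/- arXiv:1903.08736 — 2 statements merged into one kernel-verified Lean document; each statement's English description precedes it below -/
import Mathlib

section
/- Let Q be a d×d real Markov generator. Then the limit M∞ = lim_{t→∞} exp(t·Q) exists, M∞ is a Markov matrix, and M∞² = M∞ (so M∞ is an idempotent Markov matrix). -/
/-- A Markov matrix: nonnegative entries, each row sums to 1. -/
def IsMarkov {d : ℕ} (M : Matrix (Fin d) (Fin d) ℝ) : Prop :=
  (∀ i j, 0 ≤ M i j) ∧ ∀ i, ∑ j, M i j = 1

/-- A Markov generator (rate matrix): nonnegative off-diagonal entries,
each row sums to 0. -/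
def IsGenerator {d : ℕ} (Q : Matrix (Fin d) (Fin d) ℝ) : Prop :=
  (∀ i j, i ≠ j → 0 ≤ Q i j) ∧ ∀ i, ∑ j, Q i j = 0

/-!
Over `ℂ`, `exp (t • Q) v` converges for every generalized eigenvector `v` of `Q`. By Gershgorin,
every eigenvalue `μ` lies in a disc `|μ + r| ≤ r` with `r ≥ 0`, so either `Re μ < 0`, and then
`exp (t • Q) v = e^{tμ} · (polynomial in t)` tends to `0`, or `μ = 0`. In the latter case the
Jordan chain is trivial, since `exp (t • Q)` is Markov, hence a contraction for the sup norm,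
while `exp (t • Q) v = v + t • Q v` whenever `Q (Q v) = 0`; thus `exp (t • Q) v = v`.
The limit is Markov because Markov matrices form a closed set (nonnegativity of `exp (t • Q)`
comes from writing `Q = (Q + c • 1) - c • 1` with `Q + c • 1` entrywise nonnegative), and it is
idempotent because `exp ((2 * t) • Q) = exp (t • Q) ^ 2`.
-/

open NormedSpace Filter Topology Finset
open scoped Matrix Nat

theorem Complex.re_neg_or_eq_zero_of_mem_closedBall {μ : ℂ} {r : ℝ}
    (h : μ ∈ Metric.closedBall (-r : ℂ) r) : μ.re < 0 ∨ μ = 0 := by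
  rw [Metric.mem_closedBall, dist_eq_norm] at h
  have hr : 0 ≤ r := (norm_nonneg _).trans h
  rw [← sq_le_sq₀ (norm_nonneg _) hr, Complex.sq_norm, Complex.normSq_apply] at h
  simp only [sub_neg_eq_add, Complex.add_re, Complex.ofReal_re, Complex.add_im,
    Complex.ofReal_im, add_zero] at h
  by_contra! hμ
  refine hμ.2 (Complex.ext ?_ ?_) <;> simp only [Complex.zero_re, Complex.zero_im] <;>
    nlinarith [sq_nonneg μ.im, sq_nonneg μ.re, mul_nonneg hr hμ.1]

theorem Complex.tendsto_exp_mul_mul_pow_atTop_nhds_zero {μ : ℂ} (hμ : μ.re < 0) (m : ℕ) :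
    Tendsto (fun t : ℝ => Complex.exp (t * μ) * (t : ℂ) ^ m) atTop (𝓝 0) := by
  rw [tendsto_zero_iff_norm_tendsto_zero]
  refine (tendsto_rpow_mul_exp_neg_mul_atTop_nhds_zero m (-μ.re) (by linarith)).congr' ?_
  filter_upwards [eventually_ge_atTop 0] with t ht
  rw [norm_mul, Complex.norm_exp, norm_pow, Complex.norm_real, Real.norm_of_nonneg ht,
    Real.rpow_natCast, mul_comm]
  simp [mul_comm]

namespace Matrix

variable {n : Type*} [Fintype n] [DecidableEq n]

section RCLike

variable {𝕂 : Type*} [RCLike 𝕂]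

theorem hasSum_exp (A : Matrix n n 𝕂) : HasSum (fun k => (k !⁻¹ : 𝕂) • A ^ k) (exp A) := by
  have hs : Summable (fun k => (k !⁻¹ : 𝕂) • A ^ k) := by
    open scoped Norms.Operator in exact expSeries_summable' A
  simpa only [exp_eq_tsum 𝕂] using hs.hasSum

theorem hasSum_exp_mulVec (A : Matrix n n 𝕂) (v : n → 𝕂) :
    HasSum (fun k => (k !⁻¹ : 𝕂) • (A ^ k *ᵥ v)) (exp A *ᵥ v) := by
  simpa [mulVec.addMonoidHomLeft, Function.comp_def, smul_mulVec] using
    (hasSum_exp A).map (mulVec.addMonoidHomLeft v) (continuous_id.matrix_mulVec continuous_const)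

theorem exp_mulVec_eq_sum_of_pow_mulVec_eq_zero {A : Matrix n n 𝕂} {v : n → 𝕂} {k : ℕ}
    (h : A ^ k *ᵥ v = 0) :
    exp A *ᵥ v = ∑ m ∈ range k, (m !⁻¹ : 𝕂) • (A ^ m *ᵥ v) := by
  refine (hasSum_exp_mulVec A v).unique (hasSum_sum_of_ne_finset_zero fun m hm => ?_)
  obtain ⟨l, rfl⟩ := Nat.exists_eq_add_of_le (not_lt.mp (mem_range.not.mp hm))
  rw [pow_add, (Commute.pow_pow_self A k l).eq, ← mulVec_mulVec, h, mulVec_zero, smul_zero]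

theorem exp_mulVec_of_mulVec_eq_zero {A : Matrix n n 𝕂} {v : n → 𝕂} (h : A *ᵥ v = 0) :
    exp A *ᵥ v = v := by
  rw [exp_mulVec_eq_sum_of_pow_mulVec_eq_zero (k := 1) (by simpa using h)]
  simp

theorem exp_add_smul_one (A : Matrix n n 𝕂) (c : 𝕂) : exp (A + c • 1) = exp c • exp A := by
  have hscalar : exp (c • 1 : Matrix n n 𝕂) = exp c • 1 := by
    rw [← Algebra.algebraMap_eq_smul_one, ← Algebra.algebraMap_eq_smul_one]
    open scoped Norms.Operator in
    exact (map_exp (algebraMap 𝕂 (Matrix n n 𝕂)) (continuous_algebraMap _ _) c).symm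
  rw [exp_add_of_commute _ _ ((Commute.one_right A).smul_right c), hscalar, mul_smul_comm,
    mul_one]

theorem isIdempotentElem_of_tendsto_exp_smul {A L : Matrix n n 𝕂}
    (hL : Tendsto (fun t : ℝ => exp (t • A)) atTop (𝓝 L)) : IsIdempotentElem L := by
  have hdouble : ∀ t : ℝ, exp ((2 * t) • A) = exp (t • A) * exp (t • A) := fun t => by
    rw [two_mul, add_smul, exp_add_of_commute _ _ (Commute.refl _)]
  refine tendsto_nhds_unique (hL.mul hL) ?_
  simpa only [Function.comp_def, id_eq, hdouble] using
    hL.comp (tendsto_id.const_mul_atTop two_pos)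

end RCLike

section Real

theorem exp_apply_nonneg_of_nonneg {A : Matrix n n ℝ} (h : ∀ i j, 0 ≤ A i j) (i j : n) :
    0 ≤ exp A i j :=
  (Pi.hasSum.mp (Pi.hasSum.mp (hasSum_exp A) i) j).nonneg fun k =>
    mul_nonneg (by positivity) (pow_apply_nonneg h k i j)

theorem exp_apply_nonneg_of_offDiag_nonneg {A : Matrix n n ℝ} (h : ∀ i j, i ≠ j → 0 ≤ A i j)
    (i j : n) : 0 ≤ exp A i j := by
  set c := ∑ k, |A k k|
  have hshift : ∀ i j, 0 ≤ (A + c • 1) i j := by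
    intro i j
    rcases eq_or_ne i j with rfl | hij
    · have : |A i i| ≤ c := single_le_sum (fun k _ => abs_nonneg (A k k)) (mem_univ i)
      simp only [add_apply, smul_apply, one_apply_eq, smul_eq_mul, mul_one]
      linarith [neg_abs_le (A i i)]
    · simpa [hij] using h i j hij
  have hexp : exp A = exp (-c) • exp (A + c • 1) := by
    rw [← exp_add_smul_one, add_assoc, ← add_smul, add_neg_cancel, zero_smul, add_zero]
  rw [hexp, smul_apply, smul_eq_mul]
  exact mul_nonneg (Real.exp_eq_exp_ℝ ▸ (Real.exp_pos _).le)
    (exp_apply_nonneg_of_nonneg hshift i j)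

theorem exp_map_ofReal (M : Matrix n n ℝ) :
    exp (M.map (↑) : Matrix n n ℂ) = (exp M).map (↑) := by
  open scoped Norms.Operator in
  exact (map_exp (Complex.ofRealHom.mapMatrix : Matrix n n ℝ →+* Matrix n n ℂ)
    (continuous_id.matrix_map Complex.continuous_ofReal) M).symm

end Real

section Convergence

variable {A : Matrix n n ℂ}

theorem mulVec_eq_zero_of_mulVec_mulVec_eq_zero {v : n → ℂ}
    (hv : ∃ C, ∀ t : ℝ, 0 ≤ t → ‖exp (t • A) *ᵥ v‖ ≤ C) (h : A *ᵥ (A *ᵥ v) = 0) :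
    A *ᵥ v = 0 := by
  have hexp : ∀ t : ℝ, exp (t • A) *ᵥ v = v + t • (A *ᵥ v) := fun t => by
    rw [exp_mulVec_eq_sum_of_pow_mulVec_eq_zero (k := 2)
      (by rw [smul_pow, smul_mulVec, pow_two A, ← mulVec_mulVec, h, smul_zero])]
    simp [sum_range_succ, smul_mulVec]
  obtain ⟨C, hC⟩ := hv
  by_contra hAv
  have hpos : 0 < ‖A *ᵥ v‖ := norm_pos_iff.mpr hAv
  set T := (|C| + ‖v‖ + 1) / ‖A *ᵥ v‖
  have hT : ‖T • (A *ᵥ v)‖ = |C| + ‖v‖ + 1 := by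
    rw [norm_smul, Real.norm_of_nonneg (by positivity), div_mul_cancel₀ _ hpos.ne']
  have htri := norm_sub_le (v + T • (A *ᵥ v)) v
  rw [add_sub_cancel_left, ← hexp T] at htri
  linarith [hC T (by positivity), le_abs_self C]

theorem mulVec_eq_zero_of_pow_mulVec_eq_zero
    (hbdd : ∀ v : n → ℂ, ∃ C, ∀ t : ℝ, 0 ≤ t → ‖exp (t • A) *ᵥ v‖ ≤ C) {k : ℕ} {v : n → ℂ}
    (h : A ^ k *ᵥ v = 0) : A *ᵥ v = 0 := by
  induction k generalizing v with
  | zero => simp_all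
  | succ k ih =>
    refine mulVec_eq_zero_of_mulVec_mulVec_eq_zero (hbdd v) (ih ?_)
    rwa [mulVec_mulVec, ← pow_succ]

theorem tendsto_exp_smul_mulVec_of_re_neg {μ : ℂ} (hμ : μ.re < 0) {k : ℕ} {v : n → ℂ}
    (h : (A - μ • 1) ^ k *ᵥ v = 0) :
    Tendsto (fun t : ℝ => exp (t • A) *ᵥ v) atTop (𝓝 0) := by
  set N := A - μ • 1
  have hexp : ∀ t : ℝ, exp (t • A) *ᵥ v =
      ∑ m ∈ range k, (Complex.exp (t * μ) * (t : ℂ) ^ m) • ((m !⁻¹ : ℂ) • (N ^ m *ᵥ v)) := by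
    intro t
    have hsplit : t • A = t • N + ((t : ℂ) * μ) • 1 := by
      simp only [N, smul_sub, ← smul_assoc, Complex.real_smul, sub_add_cancel]
    rw [hsplit, exp_add_smul_one, smul_mulVec, exp_mulVec_eq_sum_of_pow_mulVec_eq_zero
      (by rw [smul_pow, smul_mulVec, h, smul_zero]), smul_sum]
    refine sum_congr rfl fun m _ => ?_
    rw [smul_pow, smul_mulVec, ← Complex.exp_eq_exp_ℂ, mul_smul, ← Complex.ofReal_pow,
      Complex.coe_smul, smul_comm (t ^ m)]
  simp_rw [hexp]
  simpa using tendsto_finsetSum (range k) fun m _ =>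
    (Complex.tendsto_exp_mul_mul_pow_atTop_nhds_zero hμ m).smul_const
      ((m !⁻¹ : ℂ) • (N ^ m *ᵥ v))

theorem exists_tendsto_exp_smul_mulVec
    (hbdd : ∀ v : n → ℂ, ∃ C, ∀ t : ℝ, 0 ≤ t → ‖exp (t • A) *ᵥ v‖ ≤ C)
    (hspec : ∀ μ, Module.End.HasEigenvalue (toLin' A) μ → μ.re < 0 ∨ μ = 0) (v : n → ℂ) :
    ∃ w, Tendsto (fun t : ℝ => exp (t • A) *ᵥ v) atTop (𝓝 w) := by
  have hv : v ∈ ⨆ μ, Module.End.maxGenEigenspace (toLin' A) μ := by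
    rw [Module.End.iSup_maxGenEigenspace_eq_top]; trivial
  induction hv using Submodule.iSup_induction' with
  | mem μ w hw =>
    obtain ⟨k, hk⟩ := Module.End.mem_genEigenspace_top.mp hw
    have hker : (A - μ • 1) ^ k *ᵥ w = 0 := by
      have hlin : toLinAlgEquiv' ((A - μ • 1) ^ k) = (toLin' A - μ • 1) ^ k := by
        rw [map_pow, map_sub, map_smul, map_one]; rfl
      rw [← toLinAlgEquiv'_apply, hlin]
      exact hk
    rcases eq_or_ne w 0 with rfl | hw0
    · exact ⟨0, by simp⟩
    have hμ : Module.End.HasEigenvalue (toLin' A) μ :=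
      (Module.End.hasUnifEigenvalue_iff_hasUnifEigenvalue_one (k := ⊤) ENat.top_pos).mp
        ((Submodule.ne_bot_iff _).mpr ⟨w, hw, hw0⟩)
    rcases hspec μ hμ with hneg | rfl
    · exact ⟨0, tendsto_exp_smul_mulVec_of_re_neg hneg hker⟩
    · have hAw : A *ᵥ w = 0 := mulVec_eq_zero_of_pow_mulVec_eq_zero hbdd (by simpa using hker)
      exact ⟨w, by simp [exp_mulVec_of_mulVec_eq_zero, smul_mulVec, hAw]⟩
  | zero => exact ⟨0, by simp⟩
  | add x y _ _ hx hy =>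
    obtain ⟨a, ha⟩ := hx
    obtain ⟨b, hb⟩ := hy
    exact ⟨a + b, by simpa [add_mulVec, mulVec_add] using ha.add hb⟩

theorem exists_tendsto_exp_smul
    (hbdd : ∀ v : n → ℂ, ∃ C, ∀ t : ℝ, 0 ≤ t → ‖exp (t • A) *ᵥ v‖ ≤ C)
    (hspec : ∀ μ, Module.End.HasEigenvalue (toLin' A) μ → μ.re < 0 ∨ μ = 0) :
    ∃ L, Tendsto (fun t : ℝ => exp (t • A)) atTop (𝓝 L) := by
  choose w hw using fun j => exists_tendsto_exp_smul_mulVec hbdd hspec (Pi.single j 1)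
  refine ⟨of fun i j => w j i, tendsto_pi_nhds.mpr fun i => tendsto_pi_nhds.mpr fun j => ?_⟩
  simpa [mulVec_single_one] using tendsto_pi_nhds.mp (hw j) i

end Convergence

end Matrix

open Matrix

section Markov

variable {d : ℕ}

theorem isClosed_setOf_isMarkov : IsClosed {M : Matrix (Fin d) (Fin d) ℝ | IsMarkov M} := by
  simp only [IsMarkov, Set.ofPred_and, Set.ofPred_forall]
  exact (isClosed_iInter fun i => isClosed_iInter fun j => isClosed_le continuous_const
    (by fun_prop)).inter (isClosed_iInter fun i => isClosed_eq (by fun_prop) continuous_const)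

theorem IsMarkov.norm_map_ofReal_mulVec_le {M : Matrix (Fin d) (Fin d) ℝ} (hM : IsMarkov M)
    (v : Fin d → ℂ) : ‖M.map (↑) *ᵥ v‖ ≤ ‖v‖ := by
  refine (pi_norm_le_iff_of_nonneg (norm_nonneg v)).mpr fun i => ?_
  calc ‖(M.map (↑) *ᵥ v) i‖ = ‖∑ j, (M i j : ℂ) * v j‖ := rfl
    _ ≤ ∑ j, M i j * ‖v j‖ := by
        refine (norm_sum_le _ _).trans (le_of_eq (sum_congr rfl fun j _ => ?_))
        rw [norm_mul, Complex.norm_real, Real.norm_of_nonneg (hM.1 i j)]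
    _ ≤ ∑ j, M i j * ‖v‖ := sum_le_sum fun j _ => by gcongr; exacts [hM.1 i j, norm_le_pi_norm v j]
    _ = ‖v‖ := by rw [← sum_mul, hM.2 i, one_mul]

namespace IsGenerator

variable {Q : Matrix (Fin d) (Fin d) ℝ}

theorem isMarkov_exp_smul (hQ : IsGenerator Q) {t : ℝ} (ht : 0 ≤ t) : IsMarkov (exp (t • Q)) := by
  refine ⟨exp_apply_nonneg_of_offDiag_nonneg fun i j hij => mul_nonneg ht (hQ.1 i j hij),
    fun i => ?_⟩
  have hrow : (t • Q) *ᵥ 1 = 0 := by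
    ext i
    simp [mulVec, dotProduct, ← mul_sum, hQ.2 i]
  simpa [mulVec, dotProduct] using congrFun (exp_mulVec_of_mulVec_eq_zero hrow) i

theorem re_neg_or_eq_zero_of_hasEigenvalue (hQ : IsGenerator Q) {μ : ℂ}
    (hμ : Module.End.HasEigenvalue (toLin' (Q.map (↑))) μ) : μ.re < 0 ∨ μ = 0 := by
  obtain ⟨k, hk⟩ := eigenvalue_mem_ball hμ
  refine Complex.re_neg_or_eq_zero_of_mem_closedBall (r := -Q k k) ?_
  have hrad : ∑ j ∈ univ.erase k, ‖(Q.map (↑) : Matrix (Fin d) (Fin d) ℂ) k j‖ = -Q k k := by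
    rw [eq_neg_iff_add_eq_zero, add_comm, ← hQ.2 k, ← add_sum_erase _ _ (mem_univ k)]
    congr 1
    refine sum_congr rfl fun j hj => ?_
    rw [map_apply, Complex.norm_real, Real.norm_of_nonneg (hQ.1 k j (ne_of_mem_erase hj).symm)]
  rw [hrad] at hk
  convert hk using 2
  simp

theorem exists_tendsto_exp_smul (hQ : IsGenerator Q) :
    ∃ L, Tendsto (fun t : ℝ => exp (t • Q)) atTop (𝓝 L) := by
  have hcomplex : ∀ t : ℝ,
      exp (t • Q.map (↑) : Matrix (Fin d) (Fin d) ℂ) = (exp (t • Q)).map (↑) :=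
    fun t => by rw [← exp_map_ofReal]; congr 1; ext; simp
  obtain ⟨L, hL⟩ := Matrix.exists_tendsto_exp_smul (A := Q.map (↑))
    (fun v => ⟨‖v‖, fun t ht =>
      hcomplex t ▸ (hQ.isMarkov_exp_smul ht).norm_map_ofReal_mulVec_le v⟩)
    fun μ => hQ.re_neg_or_eq_zero_of_hasEigenvalue
  refine ⟨L.map Complex.re, ?_⟩
  simpa [Function.comp_def, hcomplex, Matrix.map_map] using
    ((continuous_id.matrix_map Complex.continuous_re).tendsto L).comp hL

end IsGenerator

end Markov

theorem markov_semigroup_limit (d : ℕ) (Q : Matrix (Fin d) (Fin d) ℝ)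
    (hQ : IsGenerator Q) :
    ∃ Minf : Matrix (Fin d) (Fin d) ℝ,
      Filter.Tendsto (fun t : ℝ => NormedSpace.exp (t • Q))
        Filter.atTop (nhds Minf) ∧
      IsMarkov Minf ∧ Minf * Minf = Minf := by
  obtain ⟨L, hL⟩ := hQ.exists_tendsto_exp_smul
  refine ⟨L, hL, isClosed_setOf_isMarkov.mem_of_tendsto hL ?_,
    isIdempotentElem_of_tendsto_exp_smul hL⟩
  filter_upwards [eventually_ge_atTop 0] with t ht using hQ.isMarkov_exp_smul ht
end

section
/- Let Q = C − c·1 and Q' = C' − c'·1 be two d×d equal-input Markov generators (so C, C' have equal nonnegative rows with row sums c, c' respectively). If exp(Q) = exp(Q'), then Q = Q'. In particular, an equal-input Markov matrix admits at most one equal-input generator embedding. -/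
/-!
A matrix `Q` with `Q * Q = t • Q` has powers `Q ^ (n + 1) = t ^ n • Q`, so its exponential
collapses to `exp Q = 1 + exprel t • Q`, where `exprel t = (eᵗ - 1) / t` never vanishes.
An equal-input generator `Q = C - c • 1` has `C * C = c • C`, hence `Q * Q = -c • Q`.
Then `E = exp Q - 1` satisfies `E * E = (eᵗ - 1) • E`; so unless `E = 0` (i.e. `Q = 0`),
`E` determines `eᵗ`, hence `t`, hence `Q = (exprel t)⁻¹ • E`.
-/

open Nat

/-- `(eᵗ - 1) / t`, extended by `1` at `t = 0`. -/
noncomputable def exprel (t : ℝ) : ℝ := ∑' n : ℕ, t ^ n / (n + 1)!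

lemma hasSum_exprel (t : ℝ) : HasSum (fun n : ℕ => t ^ n / (n + 1)!) (exprel t) := by
  refine (Summable.of_norm_bounded (Real.summable_pow_div_factorial |t|) fun n => ?_).hasSum
  rw [norm_div, norm_pow, Real.norm_eq_abs, Real.norm_natCast]
  gcongr
  exact n.le_succ

lemma exprel_mul_eq_exp_sub_one (t : ℝ) : exprel t * t = Real.exp t - 1 := by
  have hexp : HasSum (fun n : ℕ => t ^ n / n !) (Real.exp t) := by
    simpa [Real.exp_eq_exp_ℝ, div_eq_inv_mul] using
      NormedSpace.exp_series_hasSum_exp' (𝕂 := ℝ) t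
  have hshift : HasSum (fun n : ℕ => t ^ (n + 1) / (n + 1)!) (Real.exp t - 1) := by
    simpa using (hasSum_nat_add_iff' 1).mpr hexp
  refine ((hasSum_exprel t).mul_right t).unique (hshift.congr_fun fun n => ?_)
  rw [pow_succ, div_mul_eq_mul_div]

lemma exprel_zero : exprel 0 = 1 := by
  simpa using (hasSum_exprel 0).unique (hasSum_single 0 fun n hn => by simp [hn])

lemma exprel_ne_zero (t : ℝ) : exprel t ≠ 0 := by
  rcases eq_or_ne t 0 with rfl | ht
  · simp [exprel_zero]
  · intro h
    have := exprel_mul_eq_exp_sub_one t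
    rw [h, zero_mul, eq_comm, sub_eq_zero, Real.exp_eq_one_iff] at this
    exact ht this

lemma pow_succ_eq_pow_smul_of_mul_self_eq_smul {R A : Type*} [CommSemiring R] [Semiring A]
    [Algebra R A] {a : A} {t : R} (h : a * a = t • a) (n : ℕ) :
    a ^ (n + 1) = t ^ n • a := by
  induction n with
  | zero => simp
  | succ n ih => rw [pow_succ, ih, smul_mul_assoc, h, smul_smul, ← pow_succ]

section ExpOfMulSelfEqSmul

variable {𝔸 : Type*} [Ring 𝔸] [Algebra ℝ 𝔸] [TopologicalSpace 𝔸] [IsTopologicalRing 𝔸]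
  [ContinuousSMul ℝ 𝔸] [T2Space 𝔸]

theorem exp_eq_one_add_exprel_smul {A : 𝔸} {t : ℝ} (h : A * A = t • A) :
    NormedSpace.exp A = 1 + exprel t • A := by
  have hsum : HasSum (fun n : ℕ => ((n + 1)! : ℝ)⁻¹ • A ^ (n + 1)) (exprel t • A) := by
    refine ((hasSum_exprel t).smul_const A).congr_fun fun n => ?_
    rw [pow_succ_eq_pow_smul_of_mul_self_eq_smul h, smul_smul, div_eq_inv_mul]
  rw [NormedSpace.exp_eq_tsum ℝ]
  refine ((hasSum_nat_add_iff' 1).mp ?_).tsum_eq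
  simpa using hsum

lemma exp_sub_one_mul_self {A : 𝔸} {t : ℝ} (h : A * A = t • A) :
    (NormedSpace.exp A - 1) * (NormedSpace.exp A - 1) =
      (Real.exp t - 1) • (NormedSpace.exp A - 1) := by
  rw [exp_eq_one_add_exprel_smul h, add_sub_cancel_left, smul_mul_smul, h, smul_smul,
    ← exprel_mul_eq_exp_sub_one, smul_smul]
  ring_nf

theorem eq_of_exp_eq_of_mul_self_eq_smul {A B : 𝔸} {s t : ℝ} (hA : A * A = s • A)
    (hB : B * B = t • B) (h : NormedSpace.exp A = NormedSpace.exp B) : A = B := by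
  have hEA : NormedSpace.exp A - 1 = exprel s • A := by
    rw [exp_eq_one_add_exprel_smul hA, add_sub_cancel_left]
  have hEB : NormedSpace.exp A - 1 = exprel t • B := by
    rw [h, exp_eq_one_add_exprel_smul hB, add_sub_cancel_left]
  rcases eq_or_ne (NormedSpace.exp A - 1) 0 with hE | hE
  · rw [hE, eq_comm, smul_eq_zero] at hEA hEB
    rw [hEA.resolve_left (exprel_ne_zero s), hEB.resolve_left (exprel_ne_zero t)]
  · have hst : Real.exp s - 1 = Real.exp t - 1 := by
      refine smul_left_injective ℝ hE ?_
      dsimp only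
      rw [← exp_sub_one_mul_self hA, h, exp_sub_one_mul_self hB, ← h]
    obtain rfl : s = t := Real.exp_injective (by linarith)
    exact smul_right_injective 𝔸 (exprel_ne_zero s) (hEA.symm.trans hEB)

end ExpOfMulSelfEqSmul

lemma mul_self_sub_smul_one {R A : Type*} [CommRing R] [Ring A] [Algebra R A] {C : A} {c : R}
    (h : C * C = c • C) : (C - c • 1) * (C - c • 1) = (-c) • (C - c • 1) := by
  rw [sub_mul, mul_sub, mul_sub, h, smul_mul_smul, mul_smul_comm, smul_mul_assoc, one_mul, mul_one,
    one_mul]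
  module

lemma Matrix.replicateRow_mul_replicateRow {n R : Type*} [Fintype n] [CommSemiring R] (c : n → R) :
    replicateRow n c * replicateRow n c = (∑ j, c j) • replicateRow n c := by
  ext i j
  simp [Matrix.mul_apply, Finset.sum_mul]

theorem equal_input_generator_unique_general (d : ℕ)
    (c c' : Fin d → ℝ)
    (Q Q' : Matrix (Fin d) (Fin d) ℝ)
    (hQ : Q = (Matrix.of fun _ j => c j) -
      (∑ j, c j) • (1 : Matrix (Fin d) (Fin d) ℝ))
    (hQ' : Q' = (Matrix.of fun _ j => c' j) -
      (∑ j, c' j) • (1 : Matrix (Fin d) (Fin d) ℝ))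
    (h : NormedSpace.exp Q = NormedSpace.exp Q') :
    Q = Q' := by
  subst hQ hQ'
  exact eq_of_exp_eq_of_mul_self_eq_smul
    (mul_self_sub_smul_one (Matrix.replicateRow_mul_replicateRow c))
    (mul_self_sub_smul_one (Matrix.replicateRow_mul_replicateRow c')) h

theorem equal_input_generator_unique (d : ℕ)
    (c c' : Fin d → ℝ) (hc : ∀ i, 0 ≤ c i) (hc' : ∀ i, 0 ≤ c' i)
    (Q Q' : Matrix (Fin d) (Fin d) ℝ)
    (hQ : Q = (Matrix.of fun _ j => c j) -
      (∑ j, c j) • (1 : Matrix (Fin d) (Fin d) ℝ))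
    (hQ' : Q' = (Matrix.of fun _ j => c' j) -
      (∑ j, c' j) • (1 : Matrix (Fin d) (Fin d) ℝ))
    (h : NormedSpace.exp Q = NormedSpace.exp Q') :
    Q = Q' :=
  equal_input_generator_unique_general d c c' Q Q' hQ hQ' h
end
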